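/- Let n ≥ 1, d ≥ 2 and let A = [a_ij] ∈ ℝ^{n×n} have nonnegative entries and be strictly diagonally dominant. Let x be a consensus configuration, i.e. x_1 = … = x_n = x̄ for some unit vector x̄ ∈ ℝ^d. Then every complex eigenvalue of the projected Jacobian J(x) has modulus at most 1, and 1 is an eigenvalue of J(x); that is, the maximal eigenvalue modulus equals 1 and no consensus point is an unstable fixed point (C ∩ U = ∅). -/

import Mathlib

open scoped BigOperators

noncomputable section

/-- The conical combination `Σ_j a_ij x_j`. -/
def consSum {n d : ℕ} (A : Matrix (Fin n) (Fin n) ℝ)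
    (x : Fin n → EuclideanSpace ℝ (Fin d)) (i : Fin n) : EuclideanSpace ℝ (Fin d) :=
  ∑ j, A i j • x j

/-- The consensus map `f_A`: projection of the conical combination onto the unit sphere. -/
def consMap {n d : ℕ} (A : Matrix (Fin n) (Fin n) ℝ)
    (x : Fin n → EuclideanSpace ℝ (Fin d)) (i : Fin n) : EuclideanSpace ℝ (Fin d) :=
  ‖consSum A x i‖⁻¹ • consSum A x i

/-- The block-diagonal projection matrix `P_x` with diagonal blocks `I_d − x_i x_iᵀ`. -/
def projBlock {n d : ℕ} (x : Fin n → EuclideanSpace ℝ (Fin d)) :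
    Matrix (Fin n × Fin d) (Fin n × Fin d) ℝ :=
  Matrix.of fun p q =>
    if p.1 = q.1 then (if p.2 = q.2 then (1 : ℝ) else 0) - x p.1 p.2 * x p.1 q.2 else 0

/-- The diagonal normalization matrix `D(AX)`, with `i`-th entry `‖Σ_j a_ij x_j‖⁻¹`. -/
def Dmat {n d : ℕ} (A : Matrix (Fin n) (Fin n) ℝ)
    (x : Fin n → EuclideanSpace ℝ (Fin d)) : Matrix (Fin n) (Fin n) ℝ :=
  Matrix.diagonal fun i => ‖consSum A x i‖⁻¹

/-- The projected Jacobian `J(x) = P_{f(x)} (D(AX)A ⊗ I_d) P_x`. -/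
def Jmat {n d : ℕ} (A : Matrix (Fin n) (Fin n) ℝ)
    (x : Fin n → EuclideanSpace ℝ (Fin d)) :
    Matrix (Fin n × Fin d) (Fin n × Fin d) ℝ :=
  projBlock (consMap A x) *
    Matrix.kroneckerMap (· * ·) (Dmat A x * A) (1 : Matrix (Fin d) (Fin d) ℝ) *
    projBlock x

/-!
At a consensus point `x̄` every row sum `sᵢ` of `A` is positive, `f(x) = x`, and `J(x)` is the
Kronecker product `W ⊗ P` of the row-stochastic matrix `W = diag(s)⁻¹ A` and the orthogonal
projection `P = I - x̄ x̄ᵀ`. An eigenvector of `W ⊗ P` for `μ ≠ 0` is fixed by `I ⊗ P`, hence is an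
eigenvector of `W ⊗ I` for `μ`, so `‖μ‖ ≤ ‖W ⊗ I‖_∞ ≤ ‖W‖_∞ = 1`. Conversely, for a nonzero `q`
in the range of `P` (nonzero, as `tr P = d - 1`), the vector `𝟙 ⊗ q` is fixed by `W ⊗ P`.
-/

open Matrix
open scoped Kronecker

attribute [local instance] Matrix.linftyOpSeminormedAddCommGroup

namespace Matrix

variable {𝕜 l m n : Type*}

theorem map_kronecker {α β : Type*} [Mul α] [Mul β] {f : α → β}
    (hf : ∀ a b, f (a * b) = f a * f b) (A : Matrix l l α) (B : Matrix m m α) :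
    (A ⊗ₖ B).map f = A.map f ⊗ₖ B.map f := by
  ext p q
  exact hf _ _

theorem kronecker_mulVec_mul [Fintype m] [Fintype n] [CommSemiring 𝕜] (A : Matrix l m 𝕜)
    (B : Matrix n n 𝕜) (a : m → 𝕜) (b : n → 𝕜) :
    (A ⊗ₖ B) *ᵥ (fun p => a p.1 * b p.2) = fun p => (A *ᵥ a) p.1 * (B *ᵥ b) p.2 := by
  funext p
  simp only [mulVec, dotProduct, Fintype.sum_prod_type, kroneckerMap_apply, Finset.sum_mul_sum]
  exact Finset.sum_congr rfl fun j _ => Finset.sum_congr rfl fun k _ => by ring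

theorem linfty_opNorm_kronecker_one_le [Fintype m] [Fintype n] [SeminormedRing 𝕜] [DecidableEq n]
    (A : Matrix m m 𝕜) :
    ‖A ⊗ₖ (1 : Matrix n n 𝕜)‖ ≤ ‖A‖ := by
  suffices ‖A ⊗ₖ (1 : Matrix n n 𝕜)‖₊ ≤ ‖A‖₊ from this
  rw [linfty_opNNNorm_def, linfty_opNNNorm_def]
  refine Finset.sup_le fun p _ => ?_
  calc ∑ q, ‖(A ⊗ₖ (1 : Matrix n n 𝕜)) p q‖₊ = ∑ j, ‖A p.1 j‖₊ := by
        rw [Fintype.sum_prod_type]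
        refine Finset.sum_congr rfl fun j _ => ?_
        simp [one_apply, apply_ite]
    _ ≤ _ := Finset.le_sup (f := fun i => ∑ j, ‖A i j‖₊) (Finset.mem_univ p.1)

theorem norm_le_linfty_opNorm_of_mulVec_eq_smul [Fintype m] [NormedField 𝕜] {M : Matrix m m 𝕜}
    {μ : 𝕜} {v : m → 𝕜} (hv : v ≠ 0) (hMv : M *ᵥ v = μ • v) : ‖μ‖ ≤ ‖M‖ := by
  refine le_of_mul_le_mul_right ?_ (norm_pos_iff.mpr hv)
  calc ‖μ‖ * ‖v‖ = ‖M *ᵥ v‖ := by rw [hMv, norm_smul]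
    _ ≤ ‖M‖ * ‖v‖ := linfty_opNorm_mulVec M v

theorem norm_le_linfty_opNorm_of_kronecker_mulVec_eq_smul [Fintype m] [Fintype n] [NormedField 𝕜]
    [DecidableEq m] [DecidableEq n] {W : Matrix m m 𝕜} {P : Matrix n n 𝕜} (hP : IsIdempotentElem P)
    {μ : 𝕜} {v : m × n → 𝕜} (hv : v ≠ 0) (hWPv : (W ⊗ₖ P) *ᵥ v = μ • v) : ‖μ‖ ≤ ‖W‖ := by
  rcases eq_or_ne μ 0 with rfl | hμ
  · simp
  have hPv : ((1 : Matrix m m 𝕜) ⊗ₖ P) *ᵥ v = v := by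
    refine smul_right_injective _ hμ (show μ • _ = μ • v from ?_)
    rw [← mulVec_smul, ← hWPv, mulVec_mulVec, ← mul_kronecker_mul, one_mul, hP.eq]
  have hWv : (W ⊗ₖ (1 : Matrix n n 𝕜)) *ᵥ v = μ • v := by
    calc (W ⊗ₖ (1 : Matrix n n 𝕜)) *ᵥ v = (W ⊗ₖ (1 : Matrix n n 𝕜)) *ᵥ ((1 ⊗ₖ P) *ᵥ v) := by
          rw [hPv]
      _ = μ • v := by rw [mulVec_mulVec, ← mul_kronecker_mul, mul_one, one_mul, hWPv]
  exact (norm_le_linfty_opNorm_of_mulVec_eq_smul hv hWv).trans (linfty_opNorm_kronecker_one_le W)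

theorem exists_ne_zero_mulVec_eq_self_of_isIdempotentElem [Fintype n] [Semiring 𝕜] [DecidableEq n]
    {P : Matrix n n 𝕜} (hP : IsIdempotentElem P) (h0 : P ≠ 0) :
    ∃ q : n → 𝕜, q ≠ 0 ∧ P *ᵥ q = q := by
  obtain ⟨j, hj⟩ : ∃ j, P *ᵥ Pi.single j 1 ≠ 0 := by
    by_contra! h
    exact h0 (ext_of_mulVec_single fun j => by rw [h j, zero_mulVec])
  exact ⟨_, hj, by rw [mulVec_mulVec, hP.eq]⟩

theorem isIdempotentElem_one_sub_vecMulVec [Fintype n] [Ring 𝕜] [DecidableEq n] {u : n → 𝕜}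
    (hu : u ⬝ᵥ u = 1) : IsIdempotentElem (1 - vecMulVec u u) :=
  IsIdempotentElem.one_sub (by rw [IsIdempotentElem, vecMulVec_mul_vecMulVec, hu, one_smul])

theorem one_sub_vecMulVec_ne_zero [Fintype n] [Ring 𝕜] [CharZero 𝕜] [DecidableEq n] {u : n → 𝕜}
    (hu : u ⬝ᵥ u = 1) (hn : Fintype.card n ≠ 1) : 1 - vecMulVec u u ≠ 0 := by
  intro h
  have htr := congrArg trace h
  rw [trace_sub, trace_one, trace_vecMulVec, hu, trace_zero, sub_eq_zero] at htr
  exact hn (by exact_mod_cast htr)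

theorem diagonal_inv_sum_mul_mem_rowStochastic [Fintype m] [DecidableEq m] {A : Matrix m m ℝ}
    (hA : ∀ i j, 0 ≤ A i j) (hs : ∀ i, ∑ j, A i j ≠ 0) :
    diagonal (fun i => (∑ j, A i j)⁻¹) * A ∈ rowStochastic ℝ m := by
  refine mem_rowStochastic_iff_sum.mpr ⟨fun i j => ?_, fun i => ?_⟩
  · rw [diagonal_mul]
    exact mul_nonneg (inv_nonneg.mpr (Finset.sum_nonneg fun j _ => hA i j)) (hA i j)
  · simp_rw [diagonal_mul, ← Finset.mul_sum]
    exact inv_mul_cancel₀ (hs i)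

theorem linfty_opNorm_map_ofReal_le_one_of_mem_rowStochastic [Fintype m] [DecidableEq m]
    {W : Matrix m m ℝ} (hW : W ∈ rowStochastic ℝ m) : ‖W.map Complex.ofReal‖ ≤ 1 := by
  suffices ‖W.map Complex.ofReal‖₊ ≤ 1 from this
  rw [linfty_opNNNorm_def]
  refine Finset.sup_le fun i _ => ?_
  rw [← NNReal.coe_le_coe]
  push_cast
  simp only [map_apply, Complex.norm_real,
    Real.norm_of_nonneg (nonneg_of_mem_rowStochastic hW), sum_row_of_mem_rowStochastic hW i,
    le_refl]

end Matrix

theorem EuclideanSpace.real_dotProduct_self {ι : Type*} [Fintype ι] (u : EuclideanSpace ℝ ι) :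
    u.ofLp ⬝ᵥ u.ofLp = ‖u‖ ^ 2 := by
  simp [dotProduct, ← sq, EuclideanSpace.real_norm_sq_eq]

theorem sum_row_pos_of_diagDominant {ι : Type*} [Fintype ι] [DecidableEq ι] {A : Matrix ι ι ℝ}
    (hA : ∀ i j, 0 ≤ A i j) (hdd : ∀ i, ∑ j ∈ Finset.univ.erase i, A i j < A i i) (i : ι) :
    0 < ∑ j, A i j := by
  rw [← Finset.add_sum_erase _ _ (Finset.mem_univ i)]
  linarith [hdd i, Finset.sum_nonneg fun j (_ : j ∈ Finset.univ.erase i) => hA i j]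

section Consensus

variable {n d : ℕ} (A : Matrix (Fin n) (Fin n) ℝ) {u : EuclideanSpace ℝ (Fin d)}

theorem consSum_const (i : Fin n) : consSum A (fun _ => u) i = (∑ j, A i j) • u := by
  simp [consSum, Finset.sum_smul]

theorem norm_consSum_const (hu : ‖u‖ = 1) (i : Fin n) :
    ‖consSum A (fun _ => u) i‖ = |∑ j, A i j| := by
  rw [consSum_const, norm_smul, hu, mul_one, Real.norm_eq_abs]

theorem consMap_const (hA : ∀ i, 0 < ∑ j, A i j) (hu : ‖u‖ = 1) :
    consMap A (fun _ => u) = fun _ => u := by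
  funext i
  rw [consMap, norm_consSum_const A hu, consSum_const, abs_of_pos (hA i), smul_smul,
    inv_mul_cancel₀ (hA i).ne', one_smul]

theorem Dmat_const (hA : ∀ i, 0 < ∑ j, A i j) (hu : ‖u‖ = 1) :
    Dmat A (fun _ => u) = diagonal fun i => (∑ j, A i j)⁻¹ := by
  simp only [Dmat, norm_consSum_const A hu, abs_of_pos (hA _)]

theorem projBlock_const (u : EuclideanSpace ℝ (Fin d)) :
    projBlock (fun _ : Fin n => u) = 1 ⊗ₖ (1 - vecMulVec u.ofLp u.ofLp) := by
  ext p q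
  by_cases h : p.1 = q.1 <;> simp [projBlock, one_apply, vecMulVec_apply, h]

theorem Jmat_const (hA : ∀ i, 0 < ∑ j, A i j) (hu : ‖u‖ = 1) :
    Jmat A (fun _ => u) =
      (diagonal (fun i => (∑ j, A i j)⁻¹) * A) ⊗ₖ (1 - vecMulVec u.ofLp u.ofLp) := by
  have hP := isIdempotentElem_one_sub_vecMulVec
    (by rw [EuclideanSpace.real_dotProduct_self, hu, one_pow] : u.ofLp ⬝ᵥ u.ofLp = 1)
  rw [Jmat, consMap_const A hA hu, projBlock_const, Dmat_const A hA hu, ← mul_kronecker_mul,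
    ← mul_kronecker_mul]
  simp only [one_mul, mul_one, hP.eq]

end Consensus

/-- at a consensus configuration, every complex eigenvalue of the projected
Jacobian `J(x)` has modulus at most `1`, and `1` is an eigenvalue; hence no consensus point
is an unstable fixed point. -/
theorem stmt_8 (n d : ℕ) (hn : 1 ≤ n) (hd : 2 ≤ d)
    (A : Matrix (Fin n) (Fin n) ℝ)
    (hApos : ∀ i j, 0 ≤ A i j)
    (hdd : ∀ i, ∑ j ∈ Finset.univ.erase i, A i j < A i i)
    (xbar : EuclideanSpace ℝ (Fin d)) (hxbar : ‖xbar‖ = 1) :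
    (∀ (μ : ℂ) (v : Fin n × Fin d → ℂ), v ≠ 0 →
        ((Jmat A fun _ : Fin n => xbar).map Complex.ofReal).mulVec v = μ • v →
        ‖μ‖ ≤ 1) ∧
    ∃ v : Fin n × Fin d → ℂ, v ≠ 0 ∧
        ((Jmat A fun _ : Fin n => xbar).map Complex.ofReal).mulVec v = v := by
  have hs := sum_row_pos_of_diagDominant hApos hdd
  set W := diagonal (fun i => (∑ j, A i j)⁻¹) * A
  have hW : W ∈ rowStochastic ℝ (Fin n) :=
    diagonal_inv_sum_mul_mem_rowStochastic hApos fun i => (hs i).ne'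
  have hu : xbar.ofLp ⬝ᵥ xbar.ofLp = 1 := by
    rw [EuclideanSpace.real_dotProduct_self, hxbar, one_pow]
  set P := 1 - vecMulVec xbar.ofLp xbar.ofLp
  have hJ : (Jmat A fun _ => xbar).map Complex.ofReal =
      W.map Complex.ofReal ⊗ₖ P.map Complex.ofReal := by
    rw [Jmat_const A hs hxbar, map_kronecker Complex.ofReal_mul]
  have hP : IsIdempotentElem (P.map Complex.ofReal) :=
    (isIdempotentElem_one_sub_vecMulVec hu).map Complex.ofRealHom.mapMatrix
  refine ⟨fun μ v hv hJv => ?_, ?_⟩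
  · rw [hJ] at hJv
    exact (norm_le_linfty_opNorm_of_kronecker_mulVec_eq_smul hP hv hJv).trans
      (linfty_opNorm_map_ofReal_le_one_of_mem_rowStochastic hW)
  · have hP0 : P.map Complex.ofReal ≠ 0 := fun h =>
      one_sub_vecMulVec_ne_zero hu (by rw [Fintype.card_fin]; omega) <|
        map_injective Complex.ofReal_injective <|
          h.trans (Matrix.map_zero _ Complex.ofReal_zero).symm
    obtain ⟨q, hq0, hPq⟩ := exists_ne_zero_mulVec_eq_self_of_isIdempotentElem hP hP0
    have hW1 : W.map Complex.ofReal *ᵥ 1 = 1 := by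
      funext i
      simpa [mulVec, dotProduct] using
        congrArg Complex.ofReal (sum_row_of_mem_rowStochastic hW i)
    refine ⟨fun p => (1 : Fin n → ℂ) p.1 * q p.2, fun h => hq0 ?_, ?_⟩
    · funext k
      simpa using congrFun h (⟨0, hn⟩, k)
    · rw [hJ, kronecker_mulVec_mul, hW1, hPq]

end
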